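/- Failure of the linear Bures–trace bound for non-full-rank states: Let σ ∈ S_d be a density matrix that does not have full rank, and let ρ ∈ S_d satisfy ρσ = 0. For δ ∈ [0,1] set ρ_δ = δρ + (1−δ)σ. Then d_tr(ρ_δ, σ) = δ and F(ρ_δ, σ) = √(1−δ), and consequently d_tr(ρ_δ, σ) ≤ 2 d_B²(ρ_δ, σ) for all δ ∈ [0,1]. In particular, there exist no constants C, ε > 0 such that d_B(ρ', σ) ≤ C d_tr(ρ', σ) holds for all ρ' ∈ S_d with d_tr(ρ', σ) < ε. -/

import Mathlib

open scoped Matrix ComplexOrder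
open Matrix

section Defs

variable {m : Type*}

/-- The trace norm `‖X‖₁ = tr √(XᴴX)`. -/
noncomputable def traceNorm [Fintype m] [DecidableEq m] (X : Matrix m m ℂ) : ℝ :=
  (((Matrix.posSemidef_conjTranspose_mul_self X).1.eigenvectorUnitary.1 *
      diagonal (((↑) : ℝ → ℂ) ∘ (√·) ∘ (Matrix.posSemidef_conjTranspose_mul_self X).1.eigenvalues) *
      (star (Matrix.posSemidef_conjTranspose_mul_self X).1.eigenvectorUnitary : Matrix m m ℂ)).trace).re

/-- The trace distance `d_tr(ρ,σ) = ‖ρ - σ‖₁ / 2`. -/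
noncomputable def trDist [Fintype m] [DecidableEq m] (ρ σ : Matrix m m ℂ) : ℝ :=
  traceNorm (ρ - σ) / 2

/-- A density matrix: positive semidefinite (hence Hermitian) with unit trace. -/
def IsDensityMatrix [Fintype m] (ρ : Matrix m m ℂ) : Prop :=
  ρ.PosSemidef ∧ ρ.trace = 1

/-- Apply a superoperator, given by its matrix representation
(rows/columns indexed by matrix entry positions), to a matrix. -/
noncomputable def appS [Fintype m] (S : Matrix (m × m) (m × m) ℂ) (ρ : Matrix m m ℂ) :
    Matrix m m ℂ :=
  Matrix.of fun i j => ∑ p : m × m, S (i, j) p * ρ p.1 p.2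

/-- The Choi matrix of a superoperator. -/
def choiMatrix [Fintype m] (S : Matrix (m × m) (m × m) ℂ) : Matrix (m × m) (m × m) ℂ :=
  Matrix.of fun p q => S (p.2, q.2) (p.1, q.1)

/-- Quantum channel: completely positive (positive semidefinite Choi matrix)
and trace preserving. -/
def IsQChannelM [Fintype m] (S : Matrix (m × m) (m × m) ℂ) : Prop :=
  (choiMatrix S).PosSemidef ∧ ∀ X : Matrix m m ℂ, (appS S X).trace = X.trace

/-- `expS t L` is the superoperator `e^{tL}`. -/
noncomputable def expS [Fintype m] [DecidableEq m] (t : ℝ) (L : Matrix (m × m) (m × m) ℂ) :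
    Matrix (m × m) (m × m) ℂ :=
  NormedSpace.exp ((t : ℂ) • L)

/-- A Liouvillian: `e^{tL}` is a quantum channel for every `t ≥ 0`. -/
def IsLiouvillianM [Fintype m] [DecidableEq m] (L : Matrix (m × m) (m × m) ℂ) : Prop :=
  ∀ t : ℝ, 0 ≤ t → IsQChannelM (expS t L)

/-- `lam` is the spectral gap of the Liouvillian `L`:
`lam = inf {|Re μ| : μ eigenvalue of L, Re μ < 0}` (and such an eigenvalue exists). -/
def IsGapOf [Fintype m] [DecidableEq m] (L : Matrix (m × m) (m × m) ℂ) (lam : ℝ) : Prop :=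
  (∃ μ ∈ spectrum ℂ L, μ.re < 0) ∧
  lam = sInf {r : ℝ | ∃ μ ∈ spectrum ℂ L, μ.re < 0 ∧ r = -μ.re}

/-- `Tφ` is the peripheral evolution `T_{φ,t} = Σ_{k : Re λ_k = 0} e^{tλ_k} P_k` of the
semigroup generated by `L`: it acts as `e^{tμ}` on each generalized eigenspace of `L` with
`Re μ = 0`, and as `0` on each generalized eigenspace with `Re μ < 0`. -/
def IsPeriphEvolAt [Fintype m] (L : Matrix (m × m) (m × m) ℂ) (t : ℝ)
    (Tφ : Matrix (m × m) (m × m) ℂ) : Prop :=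
  (∀ μ : ℂ, μ.re = 0 → ∀ v ∈ Module.End.maxGenEigenspace (Matrix.mulVecLin L) μ,
      Tφ.mulVec v = Complex.exp (t * μ) • v) ∧
  (∀ μ : ℂ, μ.re < 0 → ∀ v ∈ Module.End.maxGenEigenspace (Matrix.mulVecLin L) μ,
      Tφ.mulVec v = 0)

/-- `Tφ` is the peripheral projection `T_φ = Σ_{k : |μ_k| = 1} μ_k P_k` of the channel `T`:
it acts as `μ •` on each generalized eigenspace of `T` with `|μ| = 1`, and as `0` on each
generalized eigenspace with `|μ| < 1`. -/
def IsPeriphProjM [Fintype m] (T Tφ : Matrix (m × m) (m × m) ℂ) : Prop :=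
  (∀ μ : ℂ, ‖μ‖ = 1 → ∀ v ∈ Module.End.maxGenEigenspace (Matrix.mulVecLin T) μ,
      Tφ.mulVec v = μ • v) ∧
  (∀ μ : ℂ, ‖μ‖ < 1 → ∀ v ∈ Module.End.maxGenEigenspace (Matrix.mulVecLin T) μ,
      Tφ.mulVec v = 0)

/-- The trace-norm contraction `η_tr[T] = sup_ρ d_tr(T(ρ), Tφ(ρ))` over density matrices. -/
noncomputable def etaTR [Fintype m] [DecidableEq m] (T Tφ : Matrix (m × m) (m × m) ℂ) : ℝ :=
  ⨆ ρ : {ρ : Matrix m m ℂ // IsDensityMatrix ρ}, trDist (appS T ρ.1) (appS Tφ ρ.1)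

open scoped Classical in
/-- Matrix square root of a positive semidefinite matrix (junk value `0` otherwise). -/
noncomputable def msqrt [Fintype m] [DecidableEq m] (A : Matrix m m ℂ) : Matrix m m ℂ :=
  if h : A.PosSemidef then
    h.1.eigenvectorUnitary.1 * diagonal ((↑) ∘ (√·) ∘ h.1.eigenvalues) *
      (star h.1.eigenvectorUnitary : Matrix m m ℂ)
  else 0

/-- The fidelity `F(ρ,σ) = tr √(√ρ σ √ρ)`. -/
noncomputable def fidelity [Fintype m] [DecidableEq m] (ρ σ : Matrix m m ℂ) : ℝ :=
  ((msqrt (msqrt ρ * σ * msqrt ρ)).trace).re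

/-- The Bures distance `d_B(ρ,σ) = √(1 - F(ρ,σ))`. -/
noncomputable def buresDist [Fintype m] [DecidableEq m] (ρ σ : Matrix m m ℂ) : ℝ :=
  Real.sqrt (1 - fidelity ρ σ)

/-- The Frobenius (Hilbert-Schmidt) norm `‖X‖₂ = √(tr XᴴX)`. -/
noncomputable def frobNorm [Fintype m] (X : Matrix m m ℂ) : ℝ :=
  Real.sqrt ((Xᴴ * X).trace.re)

/-- The operator (spectral) norm `‖A‖_∞`. -/
noncomputable def specNorm [Fintype m] [DecidableEq m] (A : Matrix m m ℂ) : ℝ :=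
  ‖(Matrix.toEuclideanLin A).toContinuousLinearMap‖

/-- The superoperator norm `‖S‖_{2→2} = sup {‖S(X)‖₂ : ‖X‖₂ ≤ 1}` induced by the
Frobenius norm. -/
noncomputable def superNorm22 [Fintype m] (S : Matrix (m × m) (m × m) ℂ) : ℝ :=
  ⨆ X : {X : Matrix m m ℂ // frobNorm X ≤ 1}, frobNorm (appS S X.1)

/-- The dual (Heisenberg-picture) superoperator `S*`, satisfying
`tr[A S*(B)] = tr[S(A) B]`. -/
def dualS [Fintype m] (S : Matrix (m × m) (m × m) ℂ) : Matrix (m × m) (m × m) ℂ :=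
  Matrix.of fun p q => S (q.2, q.1) (p.2, p.1)

/-- Matrix representation of the superoperator `ρ ↦ A ρ B`. -/
def sandwichS [Fintype m] (A B : Matrix m m ℂ) : Matrix (m × m) (m × m) ℂ :=
  Matrix.of fun p q => A p.1 q.1 * B q.2 p.2

/-- The Lindblad dissipator `ρ ↦ L ρ L† − (1/2)L†L ρ − (1/2)ρ L†L` in matrix
representation. -/
noncomputable def lindbladTermS [Fintype m] [DecidableEq m] (L : Matrix m m ℂ) :
    Matrix (m × m) (m × m) ℂ :=
  sandwichS L Lᴴ - (1 / 2 : ℂ) • sandwichS (Lᴴ * L) 1 - (1 / 2 : ℂ) • sandwichS 1 (Lᴴ * L)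

/-- Tensor (Kronecker) product of two superoperators. -/
def kronS {m' : Type*} [Fintype m] [Fintype m'] (S : Matrix (m × m) (m × m) ℂ)
    (S' : Matrix (m' × m') (m' × m') ℂ) :
    Matrix ((m × m') × (m × m')) ((m × m') × (m × m')) ℂ :=
  Matrix.of fun p q =>
    S (p.1.1, p.2.1) (q.1.1, q.2.1) * S' (p.1.2, p.2.2) (q.1.2, q.2.2)

end Defs

/-- `n`-fold tensor power `S^{⊗n}` of a superoperator on `M_d`. -/
noncomputable def tensorPowS (n : ℕ) {d : ℕ} (S : Matrix (Fin d × Fin d) (Fin d × Fin d) ℂ) :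
    Matrix ((Fin n → Fin d) × (Fin n → Fin d)) ((Fin n → Fin d) × (Fin n → Fin d)) ℂ :=
  Matrix.of fun p q => ∏ i, S (p.1 i, p.2 i) (q.1 i, q.2 i)

/-- `n`-fold tensor power `ρ^{⊗n}` of a matrix. -/
noncomputable def tensorPowM (n : ℕ) {d : ℕ} (ρ : Matrix (Fin d) (Fin d) ℂ) :
    Matrix (Fin n → Fin d) (Fin n → Fin d) ℂ :=
  Matrix.of fun x y => ∏ i, ρ (x i) (y i)

/-- Tensor product `A 0 ⊗ A 1 ⊗ … ⊗ A (n-1)` of a family of matrices. -/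
noncomputable def tensorFamilyM {n d : ℕ} (A : Fin n → Matrix (Fin d) (Fin d) ℂ) :
    Matrix (Fin n → Fin d) (Fin n → Fin d) ℂ :=
  Matrix.of fun x y => ∏ i, A i (x i) (y i)

/-!
Since `ρσ = σρ = 0`, the mixture `ρ_δ` commutes with `σ` and `ρ_δ σ = (1 - δ) σ²`, so
`F(ρ_δ, σ) = tr √(ρ_δ σ) = √(1 - δ)`; and `ρ_δ - σ = δ (ρ - σ)` with `|ρ - σ| = ρ + σ`, so
`d_tr(ρ_δ, σ) = δ`. Hence `d_B² = 1 - √(1 - δ) ≥ δ / 2`, while a linear bound `d_B ≤ C d_tr` would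
force `δ / 2 ≤ C² δ²`, which fails for small `δ > 0`.
-/

open scoped MatrixOrder

theorem Matrix.IsHermitian.mul_eq_zero_comm {m : Type*} [Fintype m] {A B : Matrix m m ℂ}
    (hA : A.IsHermitian) (hB : B.IsHermitian) (h : A * B = 0) : B * A = 0 := by
  simpa only [conjTranspose_mul, hA.eq, hB.eq, conjTranspose_zero] using congrArg (·ᴴ) h

section SquareRoot

variable {m : Type*} [Fintype m] [DecidableEq m]

theorem Matrix.PosSemidef.eigenvectorUnitary_mul_diagonal_sqrt_eq_cfcSqrt {A : Matrix m m ℂ}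
    (hA : A.PosSemidef) :
    hA.1.eigenvectorUnitary.1 * diagonal (((↑) : ℝ → ℂ) ∘ (√·) ∘ hA.1.eigenvalues) *
      (star hA.1.eigenvectorUnitary : Matrix m m ℂ) = CFC.sqrt A := by
  rw [CFC.sqrt_eq_real_sqrt A hA.nonneg, cfcₙ_eq_cfc, hA.1.cfc_eq, IsHermitian.cfc,
    Unitary.conjStarAlgAut_apply]
  rfl

theorem msqrt_eq_cfcSqrt {A : Matrix m m ℂ} (hA : A.PosSemidef) : msqrt A = CFC.sqrt A := by
  rw [msqrt, dif_pos hA, hA.eigenvectorUnitary_mul_diagonal_sqrt_eq_cfcSqrt]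

theorem msqrt_eq_of_mul_self {A B : Matrix m m ℂ} (hB : B.PosSemidef) (h : B * B = A) :
    msqrt A = B := by
  have hA : A.PosSemidef := by
    simpa only [← h, hB.1.eq] using posSemidef_conjTranspose_mul_self B
  rw [msqrt_eq_cfcSqrt hA]
  exact CFC.sqrt_unique h hB.nonneg

theorem traceNorm_eq_of_mul_self {X B : Matrix m m ℂ} (hB : B.PosSemidef) (h : B * B = Xᴴ * X) :
    traceNorm X = B.trace.re := by
  rw [traceNorm,
    (posSemidef_conjTranspose_mul_self X).eigenvectorUnitary_mul_diagonal_sqrt_eq_cfcSqrt,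
    CFC.sqrt_unique h hB.nonneg]

/-- Orthogonality gives `(A + B)² = (A - B)²`, so `A + B` is `|A - B|`. -/
theorem traceNorm_sub_of_mul_eq_zero {A B : Matrix m m ℂ} (hA : A.PosSemidef) (hB : B.PosSemidef)
    (hAB : A * B = 0) : traceNorm (A - B) = (A + B).trace.re := by
  have hBA := hA.1.mul_eq_zero_comm hB.1 hAB
  refine traceNorm_eq_of_mul_self (hA.add hB) ?_
  rw [conjTranspose_sub, hA.1.eq, hB.1.eq]
  simp only [add_mul, mul_add, sub_mul, mul_sub, hAB, hBA]
  abel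

theorem fidelity_eq_of_commute {ρ σ : Matrix m m ℂ} (hρ : ρ.PosSemidef) (h : Commute ρ σ) :
    fidelity ρ σ = (msqrt (ρ * σ)).trace.re := by
  have hsqrt : Commute (CFC.sqrt ρ) σ := by rw [CFC.sqrt_eq_cfc]; exact h.cfc_nnreal _
  rw [fidelity, msqrt_eq_cfcSqrt hρ, Matrix.mul_assoc, ← hsqrt.eq, ← Matrix.mul_assoc,
    CFC.sqrt_mul_sqrt_self ρ hρ.nonneg]

end SquareRoot

theorem IsDensityMatrix.convexComb {m : Type*} [Fintype m] {ρ σ : Matrix m m ℂ} {δ : ℝ}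
    (hρ : IsDensityMatrix ρ) (hσ : IsDensityMatrix σ)
    (h0 : 0 ≤ δ) (h1 : δ ≤ 1) : IsDensityMatrix ((δ : ℂ) • ρ + (1 - (δ : ℂ)) • σ) := by
  refine ⟨hρ.1.smul (by exact_mod_cast h0) |>.add (hσ.1.smul ?_), ?_⟩
  · rw [← Complex.ofReal_one, ← Complex.ofReal_sub]; exact_mod_cast sub_nonneg.mpr h1
  · rw [trace_add, trace_smul, trace_smul, hρ.2, hσ.2]; simp

section Mixture

variable {m : Type*} [Fintype m] [DecidableEq m] {ρ σ : Matrix m m ℂ} {δ : ℝ}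

theorem trDist_convexComb_of_mul_eq_zero (hρ : IsDensityMatrix ρ) (hσ : IsDensityMatrix σ)
    (horth : ρ * σ = 0) (h0 : 0 ≤ δ) : trDist ((δ : ℂ) • ρ + (1 - (δ : ℂ)) • σ) σ = δ := by
  have hδ : (0 : ℂ) ≤ δ := by exact_mod_cast h0
  have hdiff : (δ : ℂ) • ρ + (1 - (δ : ℂ)) • σ - σ = (δ : ℂ) • ρ - (δ : ℂ) • σ := by
    rw [sub_smul, one_smul]; abel
  rw [trDist, hdiff, traceNorm_sub_of_mul_eq_zero (hρ.1.smul hδ) (hσ.1.smul hδ)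
    (by rw [smul_mul_smul_comm, horth, smul_zero]), trace_add, trace_smul, trace_smul, hρ.2, hσ.2]
  simp only [smul_eq_mul, mul_one, Complex.add_re, Complex.ofReal_re]
  ring

theorem fidelity_convexComb_of_mul_eq_zero (hρ : IsDensityMatrix ρ) (hσ : IsDensityMatrix σ)
    (horth : ρ * σ = 0) (h0 : 0 ≤ δ) (h1 : δ ≤ 1) :
    fidelity ((δ : ℂ) • ρ + (1 - (δ : ℂ)) • σ) σ = √(1 - δ) := by
  set c : ℂ := ((√(1 - δ) : ℝ) : ℂ)
  have hc : c * c = 1 - δ := by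
    rw [← Complex.ofReal_mul, Real.mul_self_sqrt (sub_nonneg.mpr h1)]; push_cast; ring
  have hσρ := hρ.1.1.mul_eq_zero_comm hσ.1.1 horth
  have hleft : ((δ : ℂ) • ρ + (1 - (δ : ℂ)) • σ) * σ = (c • σ) * (c • σ) := by
    rw [add_mul, smul_mul_assoc, smul_mul_assoc, horth, smul_mul_smul_comm, hc, smul_zero, zero_add]
  have hright : σ * ((δ : ℂ) • ρ + (1 - (δ : ℂ)) • σ) = (c • σ) * (c • σ) := by
    rw [mul_add, mul_smul_comm, mul_smul_comm, hσρ, smul_mul_smul_comm, hc, smul_zero, zero_add]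
  rw [fidelity_eq_of_commute (hρ.convexComb hσ h0 h1).1 (hleft.trans hright.symm),
    hleft, msqrt_eq_of_mul_self (hσ.1.smul (by positivity)) rfl, trace_smul, hσ.2]
  simp [c]

end Mixture

theorem le_two_mul_one_sub_sqrt_one_sub {δ : ℝ} (h0 : 0 ≤ δ) (h1 : δ ≤ 1) :
    δ ≤ 2 * (1 - √(1 - δ)) := by
  have : √(1 - δ) ≤ 1 - δ / 2 :=
    Real.sqrt_le_iff.mpr ⟨by linarith, by nlinarith⟩
  linarith

open Topology in
theorem exists_pos_two_mul_sq_mul_lt (C : ℝ) {ε : ℝ} (hε : 0 < ε) :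
    ∃ δ, 0 < δ ∧ δ < ε ∧ δ ≤ 1 ∧ 2 * (C * δ) ^ 2 < δ := by
  have hsmall : ∀ᶠ δ in 𝓝 (0 : ℝ), δ < ε ∧ δ < 1 ∧ 2 * C ^ 2 * δ < 1 :=
    (gt_mem_nhds hε).and <| (gt_mem_nhds one_pos).and <|
      (continuous_const.mul continuous_id).continuousAt.eventually_lt continuousAt_const (by simp)
  obtain ⟨δ, ⟨hδε, hδ1, hδC⟩, hδ0⟩ :=
    ((hsmall.filter_mono nhdsWithin_le_nhds).and (self_mem_nhdsWithin (s := Set.Ioi 0))).exists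
  refine ⟨δ, hδ0, hδε, hδ1.le, ?_⟩
  nlinarith [mul_lt_mul_of_pos_right hδC (Set.mem_Ioi.mp hδ0)]

theorem no_linear_bures_trace_bound_general {d : ℕ}
    (σ ρ : Matrix (Fin d) (Fin d) ℂ)
    (hσ : IsDensityMatrix σ) (hρ : IsDensityMatrix ρ)
    (horth : ρ * σ = 0) :
    (∀ δ : ℝ, 0 ≤ δ → δ ≤ 1 →
      trDist ((δ : ℂ) • ρ + (1 - (δ : ℂ)) • σ) σ = δ ∧
      fidelity ((δ : ℂ) • ρ + (1 - (δ : ℂ)) • σ) σ = Real.sqrt (1 - δ) ∧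
      trDist ((δ : ℂ) • ρ + (1 - (δ : ℂ)) • σ) σ ≤
        2 * buresDist ((δ : ℂ) • ρ + (1 - (δ : ℂ)) • σ) σ ^ 2) ∧
    ¬ ∃ (C ε : ℝ), 0 < C ∧ 0 < ε ∧
        ∀ ρ' : Matrix (Fin d) (Fin d) ℂ, IsDensityMatrix ρ' →
          trDist ρ' σ < ε → buresDist ρ' σ ≤ C * trDist ρ' σ := by
  have hbound (δ : ℝ) (h0 : 0 ≤ δ) (h1 : δ ≤ 1) :
      δ ≤ 2 * buresDist ((δ : ℂ) • ρ + (1 - (δ : ℂ)) • σ) σ ^ 2 := by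
    rw [buresDist, fidelity_convexComb_of_mul_eq_zero hρ hσ horth h0 h1,
      Real.sq_sqrt (sub_nonneg.mpr (Real.sqrt_le_one.mpr (by linarith)))]
    exact le_two_mul_one_sub_sqrt_one_sub h0 h1
  refine ⟨fun δ h0 h1 => ?_, ?_⟩
  · rw [trDist_convexComb_of_mul_eq_zero hρ hσ horth h0]
    exact ⟨rfl, fidelity_convexComb_of_mul_eq_zero hρ hσ horth h0 h1, hbound δ h0 h1⟩
  · rintro ⟨C, ε, -, hε, hlin⟩
    obtain ⟨δ, hδ0, hδε, hδ1, hsmall⟩ := exists_pos_two_mul_sq_mul_lt C hε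
    set ρδ := (δ : ℂ) • ρ + (1 - (δ : ℂ)) • σ
    have htr : trDist ρδ σ = δ := trDist_convexComb_of_mul_eq_zero hρ hσ horth hδ0.le
    have hB := hlin ρδ (hρ.convexComb hσ hδ0.le hδ1) (by rwa [htr])
    rw [htr] at hB
    have hsq : buresDist ρδ σ ^ 2 ≤ (C * δ) ^ 2 := pow_le_pow_left₀ (Real.sqrt_nonneg _) hB 2
    linarith [hbound δ hδ0.le hδ1]

/-- **Failure of the linear Bures–trace bound for non-full-rank states.** -/
theorem no_linear_bures_trace_bound {d : ℕ}
    (σ ρ : Matrix (Fin d) (Fin d) ℂ)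
    (hσ : IsDensityMatrix σ) (hρ : IsDensityMatrix ρ)
    (hrank : σ.rank < d) (horth : ρ * σ = 0) :
    (∀ δ : ℝ, 0 ≤ δ → δ ≤ 1 →
      trDist ((δ : ℂ) • ρ + (1 - (δ : ℂ)) • σ) σ = δ ∧
      fidelity ((δ : ℂ) • ρ + (1 - (δ : ℂ)) • σ) σ = Real.sqrt (1 - δ) ∧
      trDist ((δ : ℂ) • ρ + (1 - (δ : ℂ)) • σ) σ ≤
        2 * buresDist ((δ : ℂ) • ρ + (1 - (δ : ℂ)) • σ) σ ^ 2) ∧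
    ¬ ∃ (C ε : ℝ), 0 < C ∧ 0 < ε ∧
        ∀ ρ' : Matrix (Fin d) (Fin d) ℂ, IsDensityMatrix ρ' →
          trDist ρ' σ < ε → buresDist ρ' σ ≤ C * trDist ρ' σ :=
  no_linear_bures_trace_bound_general σ ρ hσ hρ horth
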